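/- arXiv:2408.04871 — 3 statements merged into one kernel-verified Lean document; each statement's English description precedes it below -/
import Mathlib

section
/- Let A be a real symmetric positive semidefinite N×N matrix and f ∈ ℝ^N such that the system A q = f is solvable, and let q⁰ ∈ ℝ^N. For every α > 0 the regularized system (A + α I) q = f + α q⁰ has a unique solution q^α, and q^α converges, as α → 0⁺, to the solution of A q = f that is closest in Euclidean norm to q⁰ (the normal solution relative to q⁰). -/
open Matrix

/-- Matrix–vector multiplication as a map between Euclidean spaces. -/
noncomputable def mulE {K N : ℕ} (A : Matrix (Fin K) (Fin N) ℝ)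
    (v : EuclideanSpace ℝ (Fin N)) : EuclideanSpace ℝ (Fin K) :=
  Matrix.toEuclideanLin A v

/-!
Among the solutions `qₙ + ker A` of `A q = f`, minimality of `‖qₙ - q⁰‖` forces
`q⁰ - qₙ ⊥ ker A`, and since `A` is symmetric, `(ker A)ᗮ = range A`: so `q⁰ - qₙ = A w`.
Then `u := q^α - qₙ - α w` solves `(A + α I) u = -α² w`, while positivity of `A` gives
`α ‖u‖ ≤ ‖(A + α I) u‖`; hence `‖u‖ ≤ α ‖w‖` and `‖q^α - qₙ‖ ≤ 2 α ‖w‖ → 0`.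
-/

open RealInnerProductSpace Filter Topology

theorem tendsto_nhdsGT_zero_of_norm_sub_le_mul {F : Type*} [SeminormedAddCommGroup F]
    {g : ℝ → F} {x : F} (C : ℝ) (h : ∀ α, 0 < α → ‖g α - x‖ ≤ C * α) :
    Tendsto g (𝓝[>] 0) (𝓝 x) := by
  rw [tendsto_iff_norm_sub_tendsto_zero]
  have hlim : Tendsto (fun α : ℝ => C * α) (𝓝[>] 0) (𝓝 0) := by
    simpa using ((continuous_const_mul C).tendsto 0).mono_left nhdsWithin_le_nhds
  exact squeeze_zero' (Eventually.of_forall fun _ => norm_nonneg _)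
    (eventually_nhdsWithin_of_forall h) hlim

section Regularization

variable {E : Type*} [NormedAddCommGroup E] [InnerProductSpace ℝ E]

theorem Submodule.mem_orthogonal_of_forall_norm_le_norm_sub {K : Submodule ℝ E} {u : E}
    (h : ∀ k ∈ K, ‖u‖ ≤ ‖u - k‖) : u ∈ Kᗮ := by
  have hmin : ‖u - 0‖ = ⨅ k : (K : Set E), ‖u - k‖ :=
    le_antisymm (le_ciInf fun k => (sub_zero u).symm ▸ h k k.2)
      (ciInf_le ⟨0, Set.forall_mem_range.2 fun _ => norm_nonneg _⟩ (⟨0, K.zero_mem⟩ : K))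
  simpa [Submodule.mem_orthogonal'] using
    (norm_eq_iInf_iff_real_inner_eq_zero K K.zero_mem).1 hmin

theorem LinearMap.IsSymmetric.orthogonal_ker [FiniteDimensional ℝ E] {T : E →ₗ[ℝ] E}
    (hT : T.IsSymmetric) : (LinearMap.ker T)ᗮ = LinearMap.range T := by
  rw [← hT.orthogonal_range, Submodule.orthogonal_orthogonal]

theorem LinearMap.IsSymmetric.sub_mem_range_of_forall_norm_sub_le [FiniteDimensional ℝ E]
    {T : E →ₗ[ℝ] E} (hT : T.IsSymmetric) {f q₀ qₙ : E} (hqₙ : T qₙ = f)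
    (hmin : ∀ p, T p = f → ‖qₙ - q₀‖ ≤ ‖p - q₀‖) : q₀ - qₙ ∈ LinearMap.range T := by
  rw [← hT.orthogonal_ker]
  refine Submodule.mem_orthogonal_of_forall_norm_le_norm_sub fun k hk => ?_
  have hsol : T (qₙ + k) = f := by rw [map_add, hqₙ, LinearMap.mem_ker.1 hk, add_zero]
  calc ‖q₀ - qₙ‖ = ‖qₙ - q₀‖ := norm_sub_rev _ _
    _ ≤ ‖qₙ + k - q₀‖ := hmin _ hsol
    _ = ‖q₀ - qₙ - k‖ := by rw [norm_sub_rev]; congr 1; abel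

theorem LinearMap.IsPositive.mul_norm_le_norm_add_smul {T : E →ₗ[ℝ] E} (hT : T.IsPositive)
    (α : ℝ) (u : E) : α * ‖u‖ ≤ ‖T u + α • u‖ := by
  have key : α * ‖u‖ ^ 2 ≤ ‖T u + α • u‖ * ‖u‖ :=
    calc α * ‖u‖ ^ 2 ≤ ⟪T u, u⟫ + α * ⟪u, u⟫ := by
          rw [real_inner_self_eq_norm_sq]; linarith [hT.inner_nonneg_left u]
      _ = ⟪T u + α • u, u⟫ := by rw [inner_add_left, real_inner_smul_left]
      _ ≤ ‖T u + α • u‖ * ‖u‖ := real_inner_le_norm _ _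
  rcases (norm_nonneg u).eq_or_lt with hu | hu
  · rw [← hu, mul_zero]; exact norm_nonneg _
  · nlinarith

theorem LinearMap.IsPositive.norm_sub_le_of_regularized_eq {T : E →ₗ[ℝ] E} (hT : T.IsPositive)
    {α : ℝ} (hα : 0 < α) {f q₀ qₙ w q : E} (hqₙ : T qₙ = f) (hw : T w = q₀ - qₙ)
    (hq : T q + α • q = f + α • q₀) : ‖q - qₙ‖ ≤ 2 * ‖w‖ * α := by
  set u := q - qₙ - α • w
  have hTu : T u + α • u = -(α * α) • w := by
    simp only [u, map_sub, map_smul, hw]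
    linear_combination (norm := module) hq - hqₙ
  have hu : ‖u‖ ≤ α * ‖w‖ := by
    have := hT.mul_norm_le_norm_add_smul α u
    rw [hTu, norm_smul, norm_neg, Real.norm_of_nonneg (mul_self_nonneg α), mul_assoc] at this
    exact le_of_mul_le_mul_left this hα
  calc ‖q - qₙ‖ = ‖u + α • w‖ := by simp [u]
    _ ≤ ‖u‖ + ‖α • w‖ := norm_add_le _ _
    _ = ‖u‖ + α * ‖w‖ := by rw [norm_smul, Real.norm_of_nonneg hα.le]
    _ ≤ 2 * ‖w‖ * α := by linarith

end Regularization

theorem Matrix.PosSemidef.isUnit_add_smul_one {n : Type*} [Fintype n] [DecidableEq n]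
    {A : Matrix n n ℝ} (hA : A.PosSemidef) {α : ℝ} (hα : 0 < α) :
    IsUnit (A + α • (1 : Matrix n n ℝ)) :=
  (PosDef.posSemidef_add hA (PosDef.one.smul hα)).isUnit

section mulE

variable {N : ℕ}

theorem mulE_mul (A B : Matrix (Fin N) (Fin N) ℝ) (v : EuclideanSpace ℝ (Fin N)) :
    mulE (A * B) v = mulE A (mulE B v) := by
  simp [mulE]

theorem mulE_one (v : EuclideanSpace ℝ (Fin N)) : mulE 1 v = v := by
  simp [mulE]

theorem mulE_add_smul_one (A : Matrix (Fin N) (Fin N) ℝ) (α : ℝ) (v : EuclideanSpace ℝ (Fin N)) :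
    mulE (A + α • (1 : Matrix (Fin N) (Fin N) ℝ)) v = mulE A v + α • v := by
  simp [mulE]

theorem mulE_eq_iff_eq_mulE_inv {B : Matrix (Fin N) (Fin N) ℝ} (hB : IsUnit B)
    (q v : EuclideanSpace ℝ (Fin N)) : mulE B q = v ↔ q = mulE B⁻¹ v := by
  have hdet := (isUnit_iff_isUnit_det B).1 hB
  constructor
  · rintro rfl; rw [← mulE_mul, B.nonsing_inv_mul hdet, mulE_one]
  · rintro rfl; rw [← mulE_mul, B.mul_nonsing_inv hdet, mulE_one]

end mulE

theorem lavrentiev_regularization_tendsto_normal_solution_general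
    (N : ℕ) (A : Matrix (Fin N) (Fin N) ℝ) (hA : A.PosSemidef)
    (f : EuclideanSpace ℝ (Fin N))
    (q0 qn : EuclideanSpace ℝ (Fin N))
    (hqn : mulE A qn = f ∧ ∀ p, mulE A p = f → ‖qn - q0‖ ≤ ‖p - q0‖) :
    (∀ α : ℝ, 0 < α →
        ∃! q : EuclideanSpace ℝ (Fin N),
          mulE (A + α • (1 : Matrix (Fin N) (Fin N) ℝ)) q = f + α • q0) ∧
      (∀ α : ℝ, 0 < α → ∀ q : EuclideanSpace ℝ (Fin N),
        mulE (A + α • (1 : Matrix (Fin N) (Fin N) ℝ)) q = f + α • q0 ↔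
          q = mulE ((A + α • (1 : Matrix (Fin N) (Fin N) ℝ))⁻¹) (f + α • q0)) ∧
      Filter.Tendsto
        (fun α : ℝ => mulE ((A + α • (1 : Matrix (Fin N) (Fin N) ℝ))⁻¹) (f + α • q0))
        (nhdsWithin 0 (Set.Ioi 0)) (nhds qn) := by
  obtain ⟨hqn, hmin⟩ := hqn
  have hT : (toEuclideanLin A).IsPositive := isPositive_toEuclideanLin_iff.2 hA
  have hsolve := fun (α : ℝ) (hα : 0 < α) q =>
    mulE_eq_iff_eq_mulE_inv (hA.isUnit_add_smul_one hα) q (f + α • q0)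
  refine ⟨fun α hα => ⟨_, (hsolve α hα _).2 rfl, fun q hq => (hsolve α hα q).1 hq⟩, hsolve, ?_⟩
  obtain ⟨w, hw⟩ := hT.isSymmetric.sub_mem_range_of_forall_norm_sub_le hqn hmin
  refine tendsto_nhdsGT_zero_of_norm_sub_le_mul (2 * ‖w‖) fun α hα => ?_
  exact hT.norm_sub_le_of_regularized_eq hα hqn hw
    ((mulE_add_smul_one A α _).symm.trans ((hsolve α hα _).2 rfl))

/-- **Lavrentiev regularization.** For a symmetric positive semidefinite `A`
with `A q = f` solvable, each regularized system `(A + α I) q = f + α q⁰` (`α > 0`) has a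
unique solution `q^α = (A + α I)⁻¹ (f + α q⁰)`, and `q^α → q_H⁰` as `α → 0⁺`, where `q_H⁰` is
the solution of `A q = f` closest in Euclidean norm to `q⁰`. -/
theorem lavrentiev_regularization_tendsto_normal_solution
    (N : ℕ) (A : Matrix (Fin N) (Fin N) ℝ) (hA : A.PosSemidef)
    (f : EuclideanSpace ℝ (Fin N)) (hsolv : ∃ q, mulE A q = f)
    (q0 qn : EuclideanSpace ℝ (Fin N))
    (hqn : mulE A qn = f ∧ ∀ p, mulE A p = f → ‖qn - q0‖ ≤ ‖p - q0‖) :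
    (∀ α : ℝ, 0 < α →
        ∃! q : EuclideanSpace ℝ (Fin N),
          mulE (A + α • (1 : Matrix (Fin N) (Fin N) ℝ)) q = f + α • q0) ∧
      (∀ α : ℝ, 0 < α → ∀ q : EuclideanSpace ℝ (Fin N),
        mulE (A + α • (1 : Matrix (Fin N) (Fin N) ℝ)) q = f + α • q0 ↔
          q = mulE ((A + α • (1 : Matrix (Fin N) (Fin N) ℝ))⁻¹) (f + α • q0)) ∧
      Filter.Tendsto
        (fun α : ℝ => mulE ((A + α • (1 : Matrix (Fin N) (Fin N) ℝ))⁻¹) (f + α • q0))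
        (nhdsWithin 0 (Set.Ioi 0)) (nhds qn) :=
  lavrentiev_regularization_tendsto_normal_solution_general N A hA f q0 qn hqn
end

section
/- Under the hypotheses and conclusion of the Tikhonov error estimate ‖q⁰_np − q^α_{hδ}‖ ≤ c₁ α + (h/α)(‖A q⁰_np − f‖ + 2 c₂² α²)^{1/2} + α^{-1/2}(c₃ h + δ), suppose h ≤ ε and δ ≤ ε for a small ε > 0. Then: (i) if the system A q = f is solvable (so ‖A q⁰_np − f‖ = 0), the choice α = ε^{2/3} yields a constant C with ‖q⁰_np − q^α_{hδ}‖ ≤ C ε^{2/3}; (ii) if A q = f is not solvable, the choice α = ε^{1/2} yields a constant C with ‖q⁰_np − q^α_{hδ}‖ ≤ C ε^{1/2}. -/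
open Matrix
open scoped Matrix.Norms.L2Operator

/-! With `h, δ ≤ ε` the three terms of the Tikhonov error estimate are of order `α`,
`(ε / α) · (√M + α)` and `ε / √α`, where `M = ‖A q⁰_np - f‖` is the residual. If the system is
solvable then `M = 0`, and `α = ε^(2/3)` balances `α` against `ε / √α`. Otherwise the term
`(ε / α) √M` is `O(α)` only for `α ≥ √ε`, and `α = ε^(1/2)` makes every term `O(√ε)`. Writing `α = t²`
(with `t = ε^(1/3)`, resp. `t = ε^(1/4)`) turns all estimates into polynomial inequalities in
`t`. -/

noncomputable def tikhonovErrorBound (c₁ c₂ c₃ M α h δ : ℝ) : ℝ :=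
  c₁ * α + (h / α) * √(M + 2 * c₂ ^ 2 * α ^ 2) + (c₃ * h + δ) / √α

section ErrorBound

variable {t h δ : ℝ}

lemma noise_div_sqrt_le (c₃ : ℝ) (ht : 0 < t) (hh : 0 ≤ h) (hht : h ≤ t ^ 3) (hδt : δ ≤ t ^ 3) :
    (c₃ * h + δ) / √(t ^ 2) ≤ (|c₃| + 1) * t ^ 2 := by
  rw [Real.sqrt_sq ht.le, div_le_iff₀ ht]
  have : c₃ * h ≤ |c₃| * t ^ 3 :=
    (mul_le_mul_of_nonneg_right (le_abs_self c₃) hh).trans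
      (mul_le_mul_of_nonneg_left hht (abs_nonneg c₃))
  linarith

lemma tikhonovErrorBound_zero_sq_le (c₁ c₂ c₃ : ℝ) (ht : 0 < t) (ht1 : t ≤ 1)
    (hh : 0 ≤ h) (hht : h ≤ t ^ 3) (hδt : δ ≤ t ^ 3) :
    tikhonovErrorBound c₁ c₂ c₃ 0 (t ^ 2) h δ ≤ (c₁ + √2 * |c₂| + |c₃| + 1) * t ^ 2 := by
  have hsqrt : √(0 + 2 * c₂ ^ 2 * (t ^ 2) ^ 2) = √2 * |c₂| * t ^ 2 := by
    rw [zero_add, Real.sqrt_mul' _ (by positivity), Real.sqrt_mul (by norm_num),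
      Real.sqrt_sq_eq_abs, Real.sqrt_sq (by positivity)]
  have hmid : h / t ^ 2 * (√2 * |c₂| * t ^ 2) ≤ √2 * |c₂| * t ^ 2 := by
    rw [div_mul_eq_mul_div, div_le_iff₀ (by positivity)]
    have : h ≤ t ^ 2 := hht.trans (pow_le_pow_of_le_one ht.le ht1 (by norm_num))
    have : 0 ≤ √2 * |c₂| * t ^ 2 := by positivity
    nlinarith
  unfold tikhonovErrorBound
  rw [hsqrt]
  linarith [noise_div_sqrt_le c₃ ht hh hht hδt]

lemma tikhonovErrorBound_sq_le (c₁ c₂ c₃ M : ℝ) (ht : 0 < t) (ht1 : t ≤ 1)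
    (hh : 0 ≤ h) (hht : h ≤ t ^ 4) (hδt : δ ≤ t ^ 4) :
    tikhonovErrorBound c₁ c₂ c₃ M (t ^ 2) h δ ≤ (c₁ + √(M + 2 * c₂ ^ 2) + |c₃| + 1) * t ^ 2 := by
  have ht43 : t ^ 4 ≤ t ^ 3 := pow_le_pow_of_le_one ht.le ht1 (by norm_num)
  have hsqrt : √(M + 2 * c₂ ^ 2 * (t ^ 2) ^ 2) ≤ √(M + 2 * c₂ ^ 2) := by
    refine Real.sqrt_le_sqrt (add_le_add_right ?_ M)
    have : (t ^ 2) ^ 2 ≤ 1 := pow_le_one₀ (by positivity) (pow_le_one₀ ht.le ht1)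
    simpa using mul_le_mul_of_nonneg_left this (by positivity : (0 : ℝ) ≤ 2 * c₂ ^ 2)
  have hdiv : h / t ^ 2 ≤ t ^ 2 := by
    rw [div_le_iff₀ (by positivity)]
    linarith
  have hmid : h / t ^ 2 * √(M + 2 * c₂ ^ 2 * (t ^ 2) ^ 2) ≤ √(M + 2 * c₂ ^ 2) * t ^ 2 := by
    rw [mul_comm _ (t ^ 2)]
    exact mul_le_mul hdiv hsqrt (Real.sqrt_nonneg _) (by positivity)
  unfold tikhonovErrorBound
  linarith [noise_div_sqrt_le c₃ ht hh (hht.trans ht43) (hδt.trans ht43)]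

end ErrorBound

lemma rpow_div_eq_pow_rpow_inv {ε : ℝ} (hε : 0 ≤ ε) (k n : ℕ) :
    ε ^ ((k : ℝ) / n) = (ε ^ ((n : ℝ)⁻¹)) ^ k := by
  rw [← Real.rpow_natCast, ← Real.rpow_mul hε, inv_mul_eq_div]

section ParameterChoice

variable {ε h δ : ℝ}

lemma tikhonovErrorBound_rpow_two_thirds_le (c₁ c₂ c₃ : ℝ) (hε : 0 < ε) (hε1 : ε ≤ 1)
    (hh : 0 ≤ h) (hhε : h ≤ ε) (hδε : δ ≤ ε) :
    tikhonovErrorBound c₁ c₂ c₃ 0 (ε ^ ((2 : ℝ) / 3)) h δ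
      ≤ (c₁ + √2 * |c₂| + |c₃| + 1) * ε ^ ((2 : ℝ) / 3) := by
  have hα := rpow_div_eq_pow_rpow_inv hε.le 2 3
  have hε3 : (ε ^ ((3 : ℕ) : ℝ)⁻¹) ^ 3 = ε := Real.rpow_inv_natCast_pow hε.le three_ne_zero
  push_cast at hα hε3
  rw [hα]
  rw [← hε3] at hhε hδε
  exact tikhonovErrorBound_zero_sq_le c₁ c₂ c₃ (by positivity)
    (Real.rpow_le_one hε.le hε1 (by norm_num)) hh hhε hδε

lemma tikhonovErrorBound_rpow_one_half_le (c₁ c₂ c₃ M : ℝ) (hε : 0 < ε)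
    (hε1 : ε ≤ 1) (hh : 0 ≤ h) (hhε : h ≤ ε) (hδε : δ ≤ ε) :
    tikhonovErrorBound c₁ c₂ c₃ M (ε ^ ((1 : ℝ) / 2)) h δ
      ≤ (c₁ + √(M + 2 * c₂ ^ 2) + |c₃| + 1) * ε ^ ((1 : ℝ) / 2) := by
  have hα := rpow_div_eq_pow_rpow_inv hε.le 2 4
  have hε4 : (ε ^ ((4 : ℕ) : ℝ)⁻¹) ^ 4 = ε := Real.rpow_inv_natCast_pow hε.le four_ne_zero
  push_cast at hα hε4
  rw [show (1 : ℝ) / 2 = 2 / 4 by norm_num, hα]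
  rw [← hε4] at hhε hδε
  exact tikhonovErrorBound_sq_le c₁ c₂ c₃ M (by positivity)
    (Real.rpow_le_one hε.le hε1 (by norm_num)) hh hhε hδε

end ParameterChoice

theorem tikhonov_parameter_choice_general
    (K N : ℕ) (A : Matrix (Fin K) (Fin N) ℝ) (f : EuclideanSpace ℝ (Fin K))
    (q0 q0np : EuclideanSpace ℝ (Fin N))
    (hps : ∀ p : EuclideanSpace ℝ (Fin N), ‖mulE A q0np - f‖ ^ 2 ≤ ‖mulE A p - f‖ ^ 2)
    (c₁ c₂ c₃ : ℝ)
    (hest : ∀ α h δ : ℝ, 0 < α → 0 ≤ h → 0 ≤ δ →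
      ∀ (Ah : Matrix (Fin K) (Fin N) ℝ) (fδ : EuclideanSpace ℝ (Fin K)),
        ‖Ah - A‖ ≤ h → ‖fδ - f‖ ≤ δ →
        ∀ q : EuclideanSpace ℝ (Fin N),
          mulE (Ahᵀ * Ah + α • (1 : Matrix (Fin N) (Fin N) ℝ)) q
              = mulE Ahᵀ fδ + α • q0 →
            ‖q0np - q‖ ≤ c₁ * α
              + (h / α) * Real.sqrt (‖mulE A q0np - f‖ + 2 * c₂ ^ 2 * α ^ 2)
              + (c₃ * h + δ) / Real.sqrt α) :
    ((∃ s, mulE A s = f) →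
      ∃ C ε₀ : ℝ, 0 < ε₀ ∧
        ∀ ε : ℝ, 0 < ε → ε ≤ ε₀ →
          ∀ h δ : ℝ, 0 ≤ h → h ≤ ε → 0 ≤ δ → δ ≤ ε →
            ∀ (Ah : Matrix (Fin K) (Fin N) ℝ) (fδ : EuclideanSpace ℝ (Fin K)),
              ‖Ah - A‖ ≤ h → ‖fδ - f‖ ≤ δ →
              ∀ q : EuclideanSpace ℝ (Fin N),
                mulE (Ahᵀ * Ah + ε ^ ((2 : ℝ)/3) • (1 : Matrix (Fin N) (Fin N) ℝ)) q
                    = mulE Ahᵀ fδ + ε ^ ((2 : ℝ)/3) • q0 →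
                  ‖q0np - q‖ ≤ C * ε ^ ((2 : ℝ)/3)) ∧
    ((¬ ∃ s, mulE A s = f) →
      ∃ C ε₀ : ℝ, 0 < ε₀ ∧
        ∀ ε : ℝ, 0 < ε → ε ≤ ε₀ →
          ∀ h δ : ℝ, 0 ≤ h → h ≤ ε → 0 ≤ δ → δ ≤ ε →
            ∀ (Ah : Matrix (Fin K) (Fin N) ℝ) (fδ : EuclideanSpace ℝ (Fin K)),
              ‖Ah - A‖ ≤ h → ‖fδ - f‖ ≤ δ →
              ∀ q : EuclideanSpace ℝ (Fin N),
                mulE (Ahᵀ * Ah + ε ^ ((1 : ℝ)/2) • (1 : Matrix (Fin N) (Fin N) ℝ)) q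
                    = mulE Ahᵀ fδ + ε ^ ((1 : ℝ)/2) • q0 →
                  ‖q0np - q‖ ≤ C * ε ^ ((1 : ℝ)/2)) := by
  refine ⟨fun ⟨s, hs⟩ => ?_, fun _ => ?_⟩
  · have hres : ‖mulE A q0np - f‖ = 0 := by
      simpa [hs] using hps s
    refine ⟨c₁ + √2 * |c₂| + |c₃| + 1, 1, one_pos, ?_⟩
    intro ε hε hε1 h δ hh hhε hδ hδε Ah fδ hAh hfδ q hq
    have hbound := hest _ h δ (by positivity) hh hδ Ah fδ hAh hfδ q hq
    rw [hres] at hbound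
    exact hbound.trans (tikhonovErrorBound_rpow_two_thirds_le c₁ c₂ c₃ hε hε1 hh hhε hδε)
  · refine ⟨c₁ + √(‖mulE A q0np - f‖ + 2 * c₂ ^ 2) + |c₃| + 1, 1, one_pos, ?_⟩
    intro ε hε hε1 h δ hh hhε hδ hδε Ah fδ hAh hfδ q hq
    exact (hest _ h δ (by positivity) hh hδ Ah fδ hAh hfδ q hq).trans
      (tikhonovErrorBound_rpow_one_half_le c₁ c₂ c₃ _ hε hε1 hh hhε hδε)

/-- **corollary of the Tikhonov error estimate.** Under the hypotheses and
conclusion of the Tikhonov error estimate, suppose `h ≤ ε` and `δ ≤ ε` for a small `ε > 0`.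
(i) If `A q = f` is solvable, the choice `α = ε^(2/3)` yields a constant `C` with
`‖q⁰_np - q^α_{hδ}‖ ≤ C ε^(2/3)`; (ii) if `A q = f` is not solvable, the choice
`α = ε^(1/2)` yields a constant `C` with `‖q⁰_np - q^α_{hδ}‖ ≤ C ε^(1/2)`. -/
theorem tikhonov_parameter_choice
    (K N : ℕ) (A : Matrix (Fin K) (Fin N) ℝ) (f : EuclideanSpace ℝ (Fin K))
    (q0 q0np : EuclideanSpace ℝ (Fin N))
    (hps : ∀ p : EuclideanSpace ℝ (Fin N), ‖mulE A q0np - f‖ ^ 2 ≤ ‖mulE A p - f‖ ^ 2)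
    (hnp : ∀ q : EuclideanSpace ℝ (Fin N),
      (∀ p : EuclideanSpace ℝ (Fin N), ‖mulE A q - f‖ ^ 2 ≤ ‖mulE A p - f‖ ^ 2) →
        ‖q0np - q0‖ ≤ ‖q - q0‖)
    (c₁ c₂ c₃ : ℝ) (hc₁ : 0 ≤ c₁) (hc₂ : 0 ≤ c₂) (hc₃ : 0 ≤ c₃)
    (hest : ∀ α h δ : ℝ, 0 < α → 0 ≤ h → 0 ≤ δ →
      ∀ (Ah : Matrix (Fin K) (Fin N) ℝ) (fδ : EuclideanSpace ℝ (Fin K)),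
        ‖Ah - A‖ ≤ h → ‖fδ - f‖ ≤ δ →
        ∀ q : EuclideanSpace ℝ (Fin N),
          mulE (Ahᵀ * Ah + α • (1 : Matrix (Fin N) (Fin N) ℝ)) q
              = mulE Ahᵀ fδ + α • q0 →
            ‖q0np - q‖ ≤ c₁ * α
              + (h / α) * Real.sqrt (‖mulE A q0np - f‖ + 2 * c₂ ^ 2 * α ^ 2)
              + (c₃ * h + δ) / Real.sqrt α) :
    ((∃ s, mulE A s = f) →
      ∃ C ε₀ : ℝ, 0 < ε₀ ∧
        ∀ ε : ℝ, 0 < ε → ε ≤ ε₀ →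
          ∀ h δ : ℝ, 0 ≤ h → h ≤ ε → 0 ≤ δ → δ ≤ ε →
            ∀ (Ah : Matrix (Fin K) (Fin N) ℝ) (fδ : EuclideanSpace ℝ (Fin K)),
              ‖Ah - A‖ ≤ h → ‖fδ - f‖ ≤ δ →
              ∀ q : EuclideanSpace ℝ (Fin N),
                mulE (Ahᵀ * Ah + ε ^ ((2 : ℝ)/3) • (1 : Matrix (Fin N) (Fin N) ℝ)) q
                    = mulE Ahᵀ fδ + ε ^ ((2 : ℝ)/3) • q0 →
                  ‖q0np - q‖ ≤ C * ε ^ ((2 : ℝ)/3)) ∧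
    ((¬ ∃ s, mulE A s = f) →
      ∃ C ε₀ : ℝ, 0 < ε₀ ∧
        ∀ ε : ℝ, 0 < ε → ε ≤ ε₀ →
          ∀ h δ : ℝ, 0 ≤ h → h ≤ ε → 0 ≤ δ → δ ≤ ε →
            ∀ (Ah : Matrix (Fin K) (Fin N) ℝ) (fδ : EuclideanSpace ℝ (Fin K)),
              ‖Ah - A‖ ≤ h → ‖fδ - f‖ ≤ δ →
              ∀ q : EuclideanSpace ℝ (Fin N),
                mulE (Ahᵀ * Ah + ε ^ ((1 : ℝ)/2) • (1 : Matrix (Fin N) (Fin N) ℝ)) q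
                    = mulE Ahᵀ fδ + ε ^ ((1 : ℝ)/2) • q0 →
                  ‖q0np - q‖ ≤ C * ε ^ ((1 : ℝ)/2)) :=
  tikhonov_parameter_choice_general K N A f q0 q0np hps c₁ c₂ c₃ hest
end

section
/- A complex N×N matrix A is normal (A A* = A* A) if and only if the multiset of its singular values coincides with the multiset of the absolute values of its eigenvalues; that is, when both the singular values σ₁ ≥ … ≥ σ_N and the absolute values of the eigenvalues |λ₁| ≥ … ≥ |λ_N| (counted with algebraic multiplicity) are arranged in non-increasing order, A is normal if and only if |λ_i(A)| = σ_i(A) for all i = 1, …, N. -/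
/-!
Schur triangulation writes `A = U T U*` with `U` unitary and `T` upper triangular. Conjugation by `U`
changes neither normality, nor the characteristic polynomial (so the eigenvalues of `A` are the
diagonal entries of `T`), nor the singular values. A normal triangular matrix is diagonal (compare
the diagonal entries of `T T*` and `T* T`, row by row), and the singular values of a diagonal
matrix are the moduli of its diagonal entries. Conversely, the squared singular values sum to
`tr (T* T) = ∑ |T i j|²`; if they are the `|T i i|`, all off-diagonal entries vanish, so `T` is
diagonal and hence normal.
-/

open Matrix Module Polynomial Unitary
open scoped InnerProductSpace

theorem Orthonormal.snoc {𝕜 E : Type*} [RCLike 𝕜] [NormedAddCommGroup E] [InnerProductSpace 𝕜 E]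
    {m : ℕ} {v : Fin m → E} {u : E} (hv : Orthonormal 𝕜 v) (hu : ‖u‖ = 1)
    (huv : ∀ i, ⟪u, v i⟫_𝕜 = 0) : Orthonormal 𝕜 (Fin.snoc v u : Fin (m + 1) → E) := by
  rw [orthonormal_iff_ite] at hv ⊢
  intro i j
  induction i using Fin.lastCases <;> induction j using Fin.lastCases <;>
    simp [hv, huv, inner_eq_zero_symm.mp (huv _), inner_self_eq_norm_sq_to_K, hu,
      Fin.castSucc_ne_last, (Fin.castSucc_ne_last _).symm]

theorem LinearMap.exists_orthonormalBasis_inner_apply_eq_zero_of_lt {E : Type*}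
    [NormedAddCommGroup E] [InnerProductSpace ℂ E] [FiniteDimensional ℂ E] {m : ℕ}
    (hm : finrank ℂ E = m) (f : E →ₗ[ℂ] E) :
    ∃ b : OrthonormalBasis (Fin m) ℂ E, ∀ i j, j < i → ⟪b i, f (b j)⟫_ℂ = 0 := by
  induction m generalizing E with
  | zero => exact ⟨(stdOrthonormalBasis ℂ E).reindex (finCongr hm), fun i => i.elim0⟩
  | succ m ih =>
    have : Nontrivial E := Module.nontrivial_of_finrank_pos (R := ℂ) (by omega)
    obtain ⟨μ, hμ⟩ := Module.End.exists_eigenvalue (LinearMap.adjoint f)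
    obtain ⟨w, hw⟩ := hμ.exists_hasEigenvector
    set u : E := (‖w‖⁻¹ : ℂ) • w
    have hu : ‖u‖ = 1 := norm_smul_inv_norm hw.2
    -- `u` spans an `f†`-invariant line, so its orthogonal complement is `f`-invariant
    have hfu : LinearMap.adjoint f u = μ • u := by
      rw [map_smul, hw.apply_eq_smul, smul_comm]
    have hW : ∀ x ∈ (ℂ ∙ u)ᗮ, f x ∈ (ℂ ∙ u)ᗮ := by
      intro x hx
      rw [Submodule.mem_orthogonal_singleton_iff_inner_right] at hx ⊢
      rw [← LinearMap.adjoint_inner_left, hfu, inner_smul_left, hx, mul_zero]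
    have hWrank : finrank ℂ (ℂ ∙ u)ᗮ = m := by
      have : Fact (finrank ℂ E = m + 1) := ⟨hm⟩
      exact Submodule.finrank_orthogonal_span_singleton
        (ne_zero_of_norm_ne_zero (hu ▸ one_ne_zero))
    obtain ⟨b', hb'⟩ := ih hWrank (f.restrict hW)
    set v : Fin (m + 1) → E := Fin.snoc (fun i => (b' i : E)) u
    have hv : Orthonormal ℂ v :=
      (b'.orthonormal.comp_linearIsometry (ℂ ∙ u)ᗮ.subtypeₗᵢ).snoc hu fun i =>
        Submodule.inner_right_of_mem_orthogonal (Submodule.mem_span_singleton_self u) (b' i).2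
    let b := basisOfOrthonormalOfCardEqFinrank hv (by simp [hm])
    have hb : ⇑b = v := coe_basisOfOrthonormalOfCardEqFinrank hv _
    refine ⟨b.toOrthonormalBasis (hb ▸ hv), fun i j hji => ?_⟩
    rw [Basis.coe_toOrthonormalBasis, hb]
    induction j using Fin.lastCases with
    | last => exact absurd hji (not_lt_of_ge (Fin.le_last i))
    | cast j =>
      induction i using Fin.lastCases with
      | last =>
        simpa [v] using Submodule.inner_right_of_mem_orthogonal
          (Submodule.mem_span_singleton_self u) (hW _ (b' j).2)
      | cast i => simpa [v] using hb' i j (Fin.castSucc_lt_castSucc_iff.mp hji)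

theorem Polynomial.roots_finset_prod_X_sub_C {R ι : Type*} [CommRing R] [IsDomain R]
    (s : Finset ι) (d : ι → R) : (∏ i ∈ s, (X - C (d i))).roots = s.val.map d := by
  rw [Finset.prod_eq_multiset_prod, ← roots_multiset_prod_X_sub_C (s.val.map d), Multiset.map_map]
  rfl

theorem eq_zero_of_sum_norm_sq_eq_norm_sq {ι E : Type*} [Fintype ι] [NormedAddCommGroup E]
    {v : ι → E} {i j : ι} (h : ∑ k, ‖v k‖ ^ 2 = ‖v i‖ ^ 2) (hji : j ≠ i) : v j = 0 := by
  classical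
  have hsplit := Finset.add_sum_erase Finset.univ (fun k => ‖v k‖ ^ 2) (Finset.mem_univ i)
  have hrest : ∑ k ∈ Finset.univ.erase i, ‖v k‖ ^ 2 = 0 := by linarith
  have := (Finset.sum_eq_zero_iff_of_nonneg fun k _ => by positivity).mp hrest j
    (Finset.mem_erase.mpr ⟨hji, Finset.mem_univ j⟩)
  simpa using this

namespace Matrix

section UnitaryConj

variable {R n : Type*} [CommRing R] [StarRing R] [Fintype n] [DecidableEq n]

theorem charpoly_conjStarAlgAut (u : unitaryGroup n R) (M : Matrix n n R) :
    (conjStarAlgAut R _ u M).charpoly = M.charpoly := by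
  rw [conjStarAlgAut_apply, charpoly_mul_comm, ← mul_assoc, coe_star_mul_self, one_mul]

theorem conjStarAlgAut_normal_iff (u : unitaryGroup n R) (M : Matrix n n R) :
    conjStarAlgAut R _ u M * (conjStarAlgAut R _ u M)ᴴ =
        (conjStarAlgAut R _ u M)ᴴ * conjStarAlgAut R _ u M ↔ M * Mᴴ = Mᴴ * M := by
  simp only [← star_eq_conjTranspose, ← map_star, ← map_mul, EquivLike.injective _ |>.eq_iff]

end UnitaryConj

theorem roots_charpoly_of_isUpperTriangular {R n : Type*} [CommRing R] [IsDomain R] [Fintype n]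
    [DecidableEq n] [LinearOrder n] {T : Matrix n n R} (hT : T.IsUpperTriangular) :
    T.charpoly.roots = Finset.univ.val.map fun i => T i i := by
  rw [charpoly_of_isUpperTriangular T hT, roots_finset_prod_X_sub_C]

theorem roots_charpoly_diagonal {R n : Type*} [CommRing R] [IsDomain R] [Fintype n]
    [DecidableEq n] (d : n → R) : (diagonal d).charpoly.roots = Finset.univ.val.map d := by
  rw [charpoly_diagonal, roots_finset_prod_X_sub_C]

section RCLike

variable {𝕜 m n : Type*} [RCLike 𝕜] [Fintype n]

noncomputable def singularValues [Fintype m] [DecidableEq n] (A : Matrix m n 𝕜) : Multiset ℝ :=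
  Finset.univ.val.map fun i => √((isHermitian_conjTranspose_mul_self A).eigenvalues i)

theorem re_diag_mul_conjTranspose_self (A : Matrix m n 𝕜) (i : m) :
    RCLike.re ((A * Aᴴ) i i) = ∑ j, ‖A i j‖ ^ 2 := by
  simp [Matrix.mul_apply, RCLike.mul_conj]

theorem re_diag_conjTranspose_mul_self (A : Matrix n m 𝕜) (j : m) :
    RCLike.re ((Aᴴ * A) j j) = ∑ i, ‖A i j‖ ^ 2 := by
  simpa using re_diag_mul_conjTranspose_self Aᴴ j

theorem sum_sq_singularValues [Fintype m] [DecidableEq n] (A : Matrix m n 𝕜) :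
    ((singularValues A).map (· ^ 2)).sum = ∑ i, ∑ j, ‖A i j‖ ^ 2 := by
  have hB := isHermitian_conjTranspose_mul_self A
  calc ((singularValues A).map (· ^ 2)).sum = ∑ j, hB.eigenvalues j := by
        simp [singularValues, Multiset.map_map,
          Real.sq_sqrt (eigenvalues_conjTranspose_mul_self_nonneg A _)]
    _ = RCLike.re (Aᴴ * A).trace := by simp [hB.trace_eq_sum_eigenvalues]
    _ = ∑ j, ∑ i, ‖A i j‖ ^ 2 := by simp [trace, re_diag_conjTranspose_mul_self]
    _ = ∑ i, ∑ j, ‖A i j‖ ^ 2 := Finset.sum_comm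

theorem singularValues_conjStarAlgAut [DecidableEq n] (u : unitaryGroup n 𝕜) (M : Matrix n n 𝕜) :
    singularValues (conjStarAlgAut 𝕜 _ u M) = singularValues M := by
  have : (isHermitian_conjTranspose_mul_self (conjStarAlgAut 𝕜 _ u M)).eigenvalues =
      (isHermitian_conjTranspose_mul_self M).eigenvalues := by
    rw [IsHermitian.eigenvalues_eq_eigenvalues_iff, ← star_eq_conjTranspose, ← map_star,
      ← map_mul, charpoly_conjStarAlgAut]
    rfl
  simp only [singularValues, this]

theorem IsDiag.commute_conjTranspose [DecidableEq n] {A : Matrix n n 𝕜} (hA : A.IsDiag) :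
    Commute A Aᴴ := by
  rw [← hA.diagonal_diag, diagonal_conjTranspose]
  exact commute_diagonal _ _

theorem IsDiag.singularValues_eq [DecidableEq n] {A : Matrix n n 𝕜} (hA : A.IsDiag) :
    singularValues A = Finset.univ.val.map fun i => ‖A i i‖ := by
  have hB := isHermitian_conjTranspose_mul_self A
  have hAA : Aᴴ * A = diagonal fun i => ((‖A i i‖ ^ 2 : ℝ) : 𝕜) := by
    rw [← hA.diagonal_diag, diagonal_conjTranspose, diagonal_mul_diagonal]
    simp [RCLike.conj_mul]
  have heig : Finset.univ.val.map hB.eigenvalues = Finset.univ.val.map fun i => ‖A i i‖ ^ 2 := by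
    apply Multiset.map_injective RCLike.ofReal_injective (β := 𝕜)
    rw [Multiset.map_map, ← hB.roots_charpoly_eq_eigenvalues, hAA, roots_charpoly_diagonal,
      Multiset.map_map]
    rfl
  calc singularValues A = (Finset.univ.val.map hB.eigenvalues).map Real.sqrt := by
        rw [Multiset.map_map]; rfl
    _ = Finset.univ.val.map fun i => ‖A i i‖ := by simp [heig, Multiset.map_map]

theorem isDiag_of_sum_norm_sq_eq {A : Matrix n n 𝕜}
    (h : ∑ i, ∑ j, ‖A i j‖ ^ 2 = ∑ i, ‖A i i‖ ^ 2) : A.IsDiag := by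
  have hrow := (Finset.sum_eq_sum_iff_of_le fun i _ =>
    Finset.single_le_sum (fun j _ => sq_nonneg ‖A i j‖) (Finset.mem_univ i)).mp h.symm
  exact fun i j hij => eq_zero_of_sum_norm_sq_eq_norm_sq (hrow i (Finset.mem_univ i)).symm hij.symm

theorem isDiag_of_singularValues_eq [DecidableEq n] {A : Matrix n n 𝕜}
    (h : singularValues A = Finset.univ.val.map fun i => ‖A i i‖) : A.IsDiag := by
  apply isDiag_of_sum_norm_sq_eq
  rw [← sum_sq_singularValues, h, Multiset.map_map]
  rfl

theorem IsUpperTriangular.isDiag_of_normal [LinearOrder n] {T : Matrix n n 𝕜}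
    (hT : T.IsUpperTriangular) (hN : T * Tᴴ = Tᴴ * T) : T.IsDiag := by
  have hrow (i : n) : ∑ j, ‖T i j‖ ^ 2 = ∑ k, ‖T k i‖ ^ 2 := by
    rw [← re_diag_mul_conjTranspose_self, ← re_diag_conjTranspose_mul_self, hN]
  suffices ∀ i j, j ≠ i → T i j = 0 from fun i j hij => this i j hij.symm
  intro i
  induction i using WellFoundedLT.induction with
  | _ i ih =>
    -- column `i` vanishes off the diagonal (above it by induction, below it by triangularity),
    -- so normality leaves row `i` no room off the diagonal either
    have hcol (k : n) (hk : k ≠ i) : T k i = 0 :=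
      (lt_or_gt_of_ne hk).elim (fun h => ih k h i hk.symm) (fun h => hT h)
    refine fun j hj => eq_zero_of_sum_norm_sq_eq_norm_sq ?_ hj
    rw [hrow, Finset.sum_eq_single i (fun k _ hk => by simp [hcol k hk]) (by simp)]

end RCLike

theorem schur_triangulation {n : ℕ} (A : Matrix (Fin n) (Fin n) ℂ) :
    ∃ (u : unitaryGroup (Fin n) ℂ) (T : Matrix (Fin n) (Fin n) ℂ),
      T.IsUpperTriangular ∧ A = conjStarAlgAut ℂ _ u T := by
  obtain ⟨b, hb⟩ := LinearMap.exists_orthonormalBasis_inner_apply_eq_zero_of_lt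
    finrank_euclideanSpace_fin (toEuclideanLin A)
  set U := (EuclideanSpace.basisFun (Fin n) ℂ).toBasis.toMatrix b
  have hU : U ∈ unitaryGroup (Fin n) ℂ :=
    (EuclideanSpace.basisFun (Fin n) ℂ).toMatrix_orthonormalBasis_mem_unitary b
  refine ⟨⟨U, hU⟩, star U * A * U, fun i j hji => ?_, ?_⟩
  · rw [← hb i j hji]
    simp only [U, Matrix.mul_apply, star_apply, Basis.toMatrix_apply,
      OrthonormalBasis.coe_toBasis_repr_apply, EuclideanSpace.basisFun_repr, RCLike.star_def,
      EuclideanSpace.inner_eq_star_dotProduct, dotProduct, ofLp_toLpLin, toLin'_apply, mulVec,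
      Pi.star_apply, Finset.mul_sum, mul_comm, mul_left_comm, mul_assoc]
    exact Finset.sum_comm
  · rw [conjStarAlgAut_apply, ← mul_assoc, ← mul_assoc, mul_star_self_of_mem hU, one_mul,
      mul_assoc, mul_star_self_of_mem hU, mul_one]

end Matrix

/-- A complex `N × N` matrix is normal (`A Aᴴ = Aᴴ A`) if and only if the
multiset of absolute values of its eigenvalues (counted with algebraic multiplicity, i.e. the
roots of the characteristic polynomial) coincides with the multiset of its singular values
(the square roots of the eigenvalues of `Aᴴ A`). -/
theorem normal_iff_abs_eigenvalues_eq_singular_values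
    (n : ℕ) (A : Matrix (Fin n) (Fin n) ℂ) :
    A * Aᴴ = Aᴴ * A ↔
      Multiset.map (fun z : ℂ => ‖z‖) A.charpoly.roots =
        Multiset.map
          (fun i : Fin n =>
            Real.sqrt ((Matrix.isHermitian_conjTranspose_mul_self A).eigenvalues i))
          Finset.univ.val := by
  obtain ⟨u, T, hT, rfl⟩ := schur_triangulation A
  change _ ↔ _ = singularValues _
  rw [conjStarAlgAut_normal_iff, charpoly_conjStarAlgAut, singularValues_conjStarAlgAut,
    roots_charpoly_of_isUpperTriangular hT, Multiset.map_map]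
  exact ⟨fun hN => (hT.isDiag_of_normal hN).singularValues_eq.symm,
    fun h => (isDiag_of_singularValues_eq h.symm).commute_conjTranspose.eq⟩
end
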